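/- arXiv:0906.0147 — 2 statements merged into one kernel-verified Lean document; each statement's English description precedes it below -/
import Mathlib

section
/- Let L be a frame with an antitone involution c satisfying x ⊔ xᶜ = ⊤, and ν : L → ℝ satisfy ν(⊥) = 0, modularity, continuity from below, and ν(a ⊓ aᶜ) = 0 for all a. If A is positive with ν(A) = sup{ν(P) : P positive}, then every positive element E ≤ Aᶜ satisfies ν(E) = 0. -/
/-!
Call `P` positive when `ν` is nonnegative on everything below `P`. Since `x ⊔ xᶜ = ⊤` and
`ν (x ⊓ xᶜ) = 0`, modularity splits `y ≥ x` as `ν y = ν x + ν (y ⊓ xᶜ)`, so `ν` is monotone below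
a positive element, and joins of positive elements are positive. Continuity from below then makes
the supremum of the values of `ν` on positive elements finite (otherwise the join of a sequence of
positive elements with `ν (Pₙ) > n` would be a positive element of infinite measure). Hence for a
positive `E ≤ Aᶜ`, maximality of `A` gives `ν (A ⊔ E) ≤ ν A`, while modularity gives
`ν (A ⊔ E) = ν A + ν E - ν (A ⊓ E)` with `ν (A ⊓ E) ≤ ν (A ⊓ Aᶜ) = 0`.
-/

open Filter Topology

def IsPositiveFor {L : Type*} [LE L] (ν : L → ℝ) (P : L) : Prop :=
  ∀ e ≤ P, 0 ≤ ν e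

section Lattice

variable {L : Type*} {ν : L → ℝ} {P Q : L}

theorem IsPositiveFor.mono [Preorder L] (hP : IsPositiveFor ν P) (hQP : Q ≤ P) :
    IsPositiveFor ν Q :=
  fun e he => hP e (he.trans hQP)

variable [DistribLattice L] [OrderTop L] {c : L → L}

theorem IsPositiveFor.measure_mono (hem : ∀ x : L, x ⊔ c x = ⊤)
    (hmod : ∀ a b : L, ν (a ⊔ b) + ν (a ⊓ b) = ν a + ν b) (hnc : ∀ a : L, ν (a ⊓ c a) = 0)
    (hP : IsPositiveFor ν P) {x y : L} (hxy : x ≤ y) (hyP : y ≤ P) : ν x ≤ ν y := by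
  have hsup : x ⊔ (y ⊓ c x) = y := by rw [sup_inf_left, hem, inf_top_eq, sup_eq_right.2 hxy]
  have hinf : x ⊓ (y ⊓ c x) = x ⊓ c x := by rw [← inf_assoc, inf_eq_left.2 hxy]
  have hsplit := hmod x (y ⊓ c x)
  rw [hsup, hinf, hnc x] at hsplit
  have := hP (y ⊓ c x) (inf_le_left.trans hyP)
  linarith

theorem IsPositiveFor.sup (hem : ∀ x : L, x ⊔ c x = ⊤)
    (hmod : ∀ a b : L, ν (a ⊔ b) + ν (a ⊓ b) = ν a + ν b) (hnc : ∀ a : L, ν (a ⊓ c a) = 0)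
    (hP : IsPositiveFor ν P) (hQ : IsPositiveFor ν Q) : IsPositiveFor ν (P ⊔ Q) := by
  intro e he
  have hsplit := hmod (e ⊓ P) (e ⊓ Q)
  rw [← inf_sup_left, inf_eq_left.2 he] at hsplit
  have h₁ : 0 ≤ ν (e ⊓ P) := hP (e ⊓ P) inf_le_right
  have h₂ : ν (e ⊓ P ⊓ (e ⊓ Q)) ≤ ν (e ⊓ Q) :=
    hQ.measure_mono hem hmod hnc inf_le_right inf_le_right
  linarith

theorem isPositiveFor_sup_iff (hem : ∀ x : L, x ⊔ c x = ⊤)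
    (hmod : ∀ a b : L, ν (a ⊔ b) + ν (a ⊓ b) = ν a + ν b) (hnc : ∀ a : L, ν (a ⊓ c a) = 0) :
    IsPositiveFor ν (P ⊔ Q) ↔ IsPositiveFor ν P ∧ IsPositiveFor ν Q :=
  ⟨fun h => ⟨h.mono le_sup_left, h.mono le_sup_right⟩,
    fun h => h.1.sup hem hmod hnc h.2⟩

end Lattice

section Frame

variable {L : Type*} [Order.Frame L] {ν : L → ℝ}

theorem isPositiveFor_iSup_of_monotone
    (hcont : ∀ h : ℕ → L, Monotone h → Tendsto (fun n => ν (h n)) atTop (𝓝 (ν (⨆ n, h n))))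
    {f : ℕ → L} (hf : Monotone f) (hpos : ∀ n, IsPositiveFor ν (f n)) :
    IsPositiveFor ν (⨆ n, f n) := by
  intro e he
  have hlim := hcont (fun n => e ⊓ f n) fun _ _ hij => inf_le_inf_left e (hf hij)
  rw [← inf_iSup_eq, inf_eq_left.2 he] at hlim
  exact ge_of_tendsto' hlim fun n => hpos n (e ⊓ f n) inf_le_right

theorem bddAbove_image_isPositiveFor {c : L → L} (hem : ∀ x : L, x ⊔ c x = ⊤)
    (hmod : ∀ a b : L, ν (a ⊔ b) + ν (a ⊓ b) = ν a + ν b)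
    (hcont : ∀ h : ℕ → L, Monotone h → Tendsto (fun n => ν (h n)) atTop (𝓝 (ν (⨆ n, h n))))
    (hnc : ∀ a : L, ν (a ⊓ c a) = 0) :
    BddAbove (ν '' {P : L | IsPositiveFor ν P}) := by
  by_contra hunbdd
  obtain ⟨P, hP, hPn⟩ : ∃ P : ℕ → L, (∀ n, IsPositiveFor ν (P n)) ∧ ∀ n : ℕ, (n : ℝ) < ν (P n) := by
    choose r hr hnr using fun n : ℕ => not_bddAbove_iff.1 hunbdd n
    choose P hP hPr using hr
    exact ⟨P, hP, fun n => (hPr n).symm ▸ hnr n⟩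
  have hpartial : ∀ n, IsPositiveFor ν (partialSups P n) := fun n =>
    (partialSups_iff_forall _ (isPositiveFor_sup_iff hem hmod hnc)).2 fun j _ => hP j
  have hS : IsPositiveFor ν (⨆ n, P n) := by
    rw [← iSup_partialSups_eq]
    exact isPositiveFor_iSup_of_monotone hcont (partialSups P).monotone hpartial
  obtain ⟨n, hn⟩ := exists_nat_gt (ν (⨆ n, P n))
  have := hS.measure_mono hem hmod hnc (le_iSup P n) le_rfl
  linarith [hPn n]

end Frame

theorem positive_below_compl_has_zero_measure_general {L : Type*} [Order.Frame L]
    (c : L → L)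
    (hem : ∀ x : L, x ⊔ c x = ⊤)
    (ν : L → ℝ)
    (hmod : ∀ a b : L, ν (a ⊔ b) + ν (a ⊓ b) = ν a + ν b)
    (hcont : ∀ h : ℕ → L, Monotone h →
      Tendsto (fun n => ν (h n)) atTop (𝓝 (ν (⨆ n, h n))))
    (hnc : ∀ a : L, ν (a ⊓ c a) = 0)
    (A : L) (hA : ∀ e ≤ A, 0 ≤ ν e)
    (hAsup : ν A = sSup (ν '' {P : L | ∀ e ≤ P, 0 ≤ ν e})) :
    ∀ E : L, (∀ e ≤ E, 0 ≤ ν e) → E ≤ c A → ν E = 0 := by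
  intro E hE hEA
  have hAE : IsPositiveFor ν (A ⊔ E) := IsPositiveFor.sup hem hmod hnc hA hE
  have hmax : ν (A ⊔ E) ≤ ν A :=
    hAsup ▸ le_csSup (bddAbove_image_isPositiveFor hem hmod hcont hnc) ⟨A ⊔ E, hAE, rfl⟩
  have hmeet : ν (A ⊓ E) ≤ ν (A ⊓ c A) :=
    IsPositiveFor.measure_mono hem hmod hnc hA (inf_le_inf_left A hEA) inf_le_left
  linarith [hmod A E, hnc A, hE E le_rfl]

theorem positive_below_compl_has_zero_measure {L : Type*} [Order.Frame L]
    (c : L → L)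
    (hem : ∀ x : L, x ⊔ c x = ⊤)
    (hanti : ∀ x y : L, x ≤ y → c y ≤ c x)
    (hinv : ∀ x : L, c (c x) = x)
    (ν : L → ℝ)
    (h0 : ν ⊥ = 0)
    (hmod : ∀ a b : L, ν (a ⊔ b) + ν (a ⊓ b) = ν a + ν b)
    (hcont : ∀ h : ℕ → L, Monotone h →
      Tendsto (fun n => ν (h n)) atTop (𝓝 (ν (⨆ n, h n))))
    (hnc : ∀ a : L, ν (a ⊓ c a) = 0)
    (A : L) (hA : ∀ e ≤ A, 0 ≤ ν e)
    (hAsup : ν A = sSup (ν '' {P : L | ∀ e ≤ P, 0 ≤ ν e})) :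
    ∀ E : L, (∀ e ≤ E, 0 ≤ ν e) → E ≤ c A → ν E = 0 :=
  positive_below_compl_has_zero_measure_general c hem ν hmod hcont hnc A hA hAsup
end

section
/- (Lattice Hahn decomposition) Let L be a frame with an antitone involution c satisfying x ⊔ xᶜ = ⊤ and ν(x ⊓ xᶜ) = 0, and let ν : L → ℝ be a finite signed lattice measure (ν(⊥) = 0, modular, continuous from below, monotone on nonnegative-measure elements and reverse-monotone on nonpositive-measure elements) such that every element e with 0 < ν(e) contains a positive sub-element of strictly positive measure. Then there exist A, B ∈ L with A ⊔ B = ⊤, ν(A ⊓ B) = 0, A positive (all sub-elements have ν ≥ 0), and B negative (all sub-elements have ν ≤ 0). -/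
/-!
The positive elements are closed under binary joins (by modularity) and under countable joins
(by continuity from below, after passing to partial joins). Hence the values of `ν` on positive
elements are bounded above, and a sequence approaching their supremum has a positive join `A`
attaining it. If some `e ≤ Aᶜ` had `0 < ν e`, it would contain a positive `x` with `0 < ν x`;
as `ν (A ⊓ x) ≤ ν (A ⊓ Aᶜ) = 0`, the positive element `A ⊔ x` would beat the maximum `ν A`.
-/

open Filter Topology

section SignedLatticeMeasure

variable {L : Type*}

def IsPositive [LE L] (ν : L → ℝ) (x : L) : Prop := ∀ y ≤ x, 0 ≤ ν y

def IsNegative [LE L] (ν : L → ℝ) (x : L) : Prop := ∀ y ≤ x, ν y ≤ 0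

namespace IsPositive

variable {ν : L → ℝ}

theorem nonneg [Preorder L] {x : L} (hx : IsPositive ν x) : 0 ≤ ν x := hx x le_rfl

theorem bot [PartialOrder L] [OrderBot L] (h0 : ν ⊥ = 0) : IsPositive ν ⊥ := fun y hy => by
  rw [le_bot_iff.mp hy, h0]

theorem sup [DistribLattice L]
    (hmono : ∀ a b : L, 0 ≤ ν a → 0 ≤ ν b → a ≤ b → ν a ≤ ν b)
    (hmod : ∀ a b : L, ν (a ⊔ b) + ν (a ⊓ b) = ν a + ν b)
    {a b : L} (ha : IsPositive ν a) (hb : IsPositive ν b) : IsPositive ν (a ⊔ b) := by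
  intro f hf
  have hsplit : (f ⊓ a) ⊔ (f ⊓ b) = f := by rw [← inf_sup_left, inf_eq_left.mpr hf]
  have hfab := hmod (f ⊓ a) (f ⊓ b)
  rw [hsplit] at hfab
  have hinf : ν ((f ⊓ a) ⊓ (f ⊓ b)) ≤ ν (f ⊓ b) :=
    hmono _ _ (hb _ (inf_le_right.trans inf_le_right)) (hb _ inf_le_right) inf_le_right
  have hfa : 0 ≤ ν (f ⊓ a) := ha _ inf_le_right
  linarith

theorem iSup_of_monotone [Order.Frame L]
    (hcont : ∀ h : ℕ → L, Monotone h →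
      Tendsto (fun n => ν (h n)) atTop (𝓝 (ν (⨆ n, h n))))
    {h : ℕ → L} (hh : Monotone h) (hpos : ∀ n, IsPositive ν (h n)) :
    IsPositive ν (⨆ n, h n) := by
  intro f hf
  have hf_eq : ⨆ n, f ⊓ h n = f := by rw [← inf_iSup_eq, inf_eq_left.mpr hf]
  have hlim := hcont (fun n => f ⊓ h n) fun m n hmn => inf_le_inf_left f (hh hmn)
  rw [hf_eq] at hlim
  exact ge_of_tendsto' hlim fun n => hpos n _ inf_le_right

theorem iSup [Order.Frame L]
    (hmono : ∀ a b : L, 0 ≤ ν a → 0 ≤ ν b → a ≤ b → ν a ≤ ν b)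
    (hmod : ∀ a b : L, ν (a ⊔ b) + ν (a ⊓ b) = ν a + ν b)
    (hcont : ∀ h : ℕ → L, Monotone h →
      Tendsto (fun n => ν (h n)) atTop (𝓝 (ν (⨆ n, h n))))
    {a : ℕ → L} (ha : ∀ n, IsPositive ν (a n)) : IsPositive ν (⨆ n, a n) := by
  have hpartial (n : ℕ) : IsPositive ν (partialSups a n) := by
    rw [partialSups_apply]
    exact Finset.sup'_induction _ _ (fun _ hx _ hy => hx.sup hmono hmod hy) fun m _ => ha m
  rw [← iSup_partialSups_eq]
  exact iSup_of_monotone hcont (partialSups a).monotone hpartial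

end IsPositive

section Maximal

variable [Order.Frame L] {ν : L → ℝ}

theorem bddAbove_image_isPositive
    (hmono : ∀ a b : L, 0 ≤ ν a → 0 ≤ ν b → a ≤ b → ν a ≤ ν b)
    (hmod : ∀ a b : L, ν (a ⊔ b) + ν (a ⊓ b) = ν a + ν b)
    (hcont : ∀ h : ℕ → L, Monotone h →
      Tendsto (fun n => ν (h n)) atTop (𝓝 (ν (⨆ n, h n)))) :
    BddAbove (ν '' {x | IsPositive ν x}) := by
  by_contra hunbdd
  rw [not_bddAbove_iff] at hunbdd
  choose y hy hny using fun n : ℕ => hunbdd n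
  choose a ha hay using hy
  have hA := IsPositive.iSup hmono hmod hcont ha
  obtain ⟨n, hn⟩ := exists_nat_gt (ν (⨆ n, a n))
  have hle : ν (a n) ≤ ν (⨆ n, a n) := hmono _ _ (ha n).nonneg hA.nonneg (le_iSup a n)
  linarith [hay n, hny n]

theorem exists_isMaxOn_isPositive (h0 : ν ⊥ = 0)
    (hmono : ∀ a b : L, 0 ≤ ν a → 0 ≤ ν b → a ≤ b → ν a ≤ ν b)
    (hmod : ∀ a b : L, ν (a ⊔ b) + ν (a ⊓ b) = ν a + ν b)
    (hcont : ∀ h : ℕ → L, Monotone h →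
      Tendsto (fun n => ν (h n)) atTop (𝓝 (ν (⨆ n, h n)))) :
    ∃ A, IsPositive ν A ∧ IsMaxOn ν {x | IsPositive ν x} A := by
  have hbdd := bddAbove_image_isPositive hmono hmod hcont
  have hne : (ν '' {x | IsPositive ν x}).Nonempty := ⟨ν ⊥, ⊥, IsPositive.bot h0, rfl⟩
  obtain ⟨u, -, hu, huS⟩ := exists_seq_tendsto_sSup hne hbdd
  choose a ha hau using huS
  have hA := IsPositive.iSup hmono hmod hcont ha
  have hsSup_le : sSup (ν '' {x | IsPositive ν x}) ≤ ν (⨆ n, a n) :=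
    le_of_tendsto' hu fun n => hau n ▸ hmono _ _ (ha n).nonneg hA.nonneg (le_iSup a n)
  exact ⟨_, hA, fun B hB => (le_csSup hbdd ⟨B, hB, rfl⟩).trans hsSup_le⟩

end Maximal

theorem isNegative_of_isMaxOn_of_inf_eq_zero [DistribLattice L] {ν : L → ℝ}
    (hmono : ∀ a b : L, 0 ≤ ν a → 0 ≤ ν b → a ≤ b → ν a ≤ ν b)
    (hmod : ∀ a b : L, ν (a ⊔ b) + ν (a ⊓ b) = ν a + ν b)
    (hsub : ∀ e : L, 0 < ν e → ∃ a ≤ e, (∀ f ≤ a, 0 ≤ ν f) ∧ 0 < ν a)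
    {A B : L} (hA : IsPositive ν A) (hmax : IsMaxOn ν {x | IsPositive ν x} A)
    (hAB : ν (A ⊓ B) = 0) : IsNegative ν B := by
  intro e heB
  by_contra! he
  obtain ⟨x, hxe, hx, hνx⟩ := hsub e he
  have hAx : ν (A ⊓ x) = 0 := by
    have hle : ν (A ⊓ x) ≤ ν (A ⊓ B) :=
      hmono _ _ (hA _ inf_le_left) hAB.ge (inf_le_inf_left A (hxe.trans heB))
    linarith [hA _ (inf_le_left : A ⊓ x ≤ A)]
  have hAx_max : ν (A ⊔ x) ≤ ν A := hmax (hA.sup hmono hmod hx)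
  linarith [hmod A x]

end SignedLatticeMeasure

theorem lattice_hahn_decomposition_general {L : Type*} [Order.Frame L]
    (c : L → L)
    (hem : ∀ x : L, x ⊔ c x = ⊤)
    (ν : L → ℝ)
    (h0 : ν ⊥ = 0)
    (hmono : ∀ a b : L, 0 ≤ ν a → 0 ≤ ν b → a ≤ b → ν a ≤ ν b)
    (hmod : ∀ a b : L, ν (a ⊔ b) + ν (a ⊓ b) = ν a + ν b)
    (hcont : ∀ h : ℕ → L, Monotone h →
      Tendsto (fun n => ν (h n)) atTop (𝓝 (ν (⨆ n, h n))))
    (hnc : ∀ x : L, ν (x ⊓ c x) = 0)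
    (hsub : ∀ e : L, 0 < ν e →
      ∃ a ≤ e, (∀ f ≤ a, 0 ≤ ν f) ∧ 0 < ν a) :
    ∃ A B : L, A ⊔ B = ⊤ ∧ ν (A ⊓ B) = 0 ∧
      (∀ e ≤ A, 0 ≤ ν e) ∧ (∀ e ≤ B, ν e ≤ 0) := by
  obtain ⟨A, hA, hmax⟩ := exists_isMaxOn_isPositive h0 hmono hmod hcont
  exact ⟨A, c A, hem A, hnc A, hA,
    isNegative_of_isMaxOn_of_inf_eq_zero hmono hmod hsub hA hmax (hnc A)⟩

theorem lattice_hahn_decomposition {L : Type*} [Order.Frame L]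
    (c : L → L)
    (hem : ∀ x : L, x ⊔ c x = ⊤)
    (hanti : ∀ x y : L, x ≤ y → c y ≤ c x)
    (hinv : ∀ x : L, c (c x) = x)
    (ν : L → ℝ)
    (h0 : ν ⊥ = 0)
    (hmono : ∀ a b : L, 0 ≤ ν a → 0 ≤ ν b → a ≤ b → ν a ≤ ν b)
    (hantimono : ∀ a b : L, ν a ≤ 0 → ν b ≤ 0 → a ≤ b → ν b ≤ ν a)
    (hmod : ∀ a b : L, ν (a ⊔ b) + ν (a ⊓ b) = ν a + ν b)
    (hcont : ∀ h : ℕ → L, Monotone h →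
      Tendsto (fun n => ν (h n)) atTop (𝓝 (ν (⨆ n, h n))))
    (hnc : ∀ x : L, ν (x ⊓ c x) = 0)
    (hsub : ∀ e : L, 0 < ν e →
      ∃ a ≤ e, (∀ f ≤ a, 0 ≤ ν f) ∧ 0 < ν a) :
    ∃ A B : L, A ⊔ B = ⊤ ∧ ν (A ⊓ B) = 0 ∧
      (∀ e ≤ A, 0 ≤ ν e) ∧ (∀ e ≤ B, ν e ≤ 0) :=
  lattice_hahn_decomposition_general c hem ν h0 hmono hmod hcont hnc hsub
end
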